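/- There is a regular theory (in a language with a binary relation ≤ and a ternary relation xy↓z) whose models in any regular category are exactly the ordered partial combinatory algebras: the axioms state that ≤ is a partial order, application is single-valued and monotone with downward closed domain, and, for a finite basis of partial combinatory arrows, that each has an inhabited predicate of realizers. -/

import Mathlib

/-!
The theory `opcaTheory` has, besides `≤` and application, a unary realizer predicate `R_t` for
every applicative term `t`. Its axioms say that `≤` is a partial order, that application is
single-valued and monotone with downward closed domain, that every `R_t` is inhabited, and that
each element of `R_t` represents `t` after passing to a cover.

In a model, single-valuedness makes the application relation the graph of a map defined on a
subobject of `A × A`. Covers are regular, hence strong, epimorphisms, so factorizations through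
subobjects and values of application descend along them; this turns the local representation of
`t` into the global one required of an OPCA. Conversely, an OPCA interprets `R_t` as the image of
a realizer chosen over a cover of `⊤`, which is inhabited at every stage because covers are stable
under pullback.
-/

open CategoryTheory CategoryTheory.Limits

universe w v u v₁ u₁ v₂ u₂ v₃ u₃

namespace RRC

variable {E : Type u} [Category.{v} E]

/-- A cover is a regular epimorphism. -/
def IsCover {X Y : E} (f : X ⟶ Y) : Prop := Nonempty (RegularEpi f)

/-- A regular category: finite limits, pullback-stable regular-epi/mono image
factorizations. -/
class RegularCat (E : Type u) [Category.{v} E] : Prop where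
  hasFiniteLimits : HasFiniteLimits E
  hasImages : HasImages E
  coverFactorThruImage : ∀ {X Y : E} (f : X ⟶ Y),
    haveI := hasImages; haveI := hasFiniteLimits; IsCover (factorThruImage f)
  coverStable : ∀ {P X Y Z : E} (fst : P ⟶ X) (snd : P ⟶ Y) (f : X ⟶ Z) (g : Y ⟶ Z),
    IsPullback fst snd f g → IsCover g → IsCover fst

attribute [instance] RegularCat.hasFiniteLimits RegularCat.hasImages

/-- A Heyting-algebra structure on a partial order (with all data pinned to the
given order). -/
structure HeytingOn (α : Type w) [PartialOrder α] where
  sup : α → α → α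
  inf : α → α → α
  himp : α → α → α
  bot : α
  top : α
  le_top : ∀ a, a ≤ top
  bot_le : ∀ a, bot ≤ a
  inf_le_left : ∀ a b, inf a b ≤ a
  inf_le_right : ∀ a b, inf a b ≤ b
  le_inf : ∀ a b c, a ≤ b → a ≤ c → a ≤ inf b c
  le_sup_left : ∀ a b, a ≤ sup a b
  le_sup_right : ∀ a b, b ≤ sup a b
  sup_le : ∀ a b c, a ≤ c → b ≤ c → sup a b ≤ c
  le_himp_iff : ∀ a b c, a ≤ himp b c ↔ inf a b ≤ c

/-- Both adjoints `∃_f ⊣ f⁻¹ ⊣ ∀_f` to the pullback map on subobject lattices. -/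
structure SubAdjoints {X Y : E} (f : X ⟶ Y) : Type (max u v) where
  pb : Subobject Y → Subobject X
  pb_spec : ∀ (S : Subobject Y) {Γ : E} (g : Γ ⟶ X), (pb S).Factors g ↔ S.Factors (g ≫ f)
  ex : Subobject X → Subobject Y
  all : Subobject X → Subobject Y
  gc_ex : ∀ (S : Subobject X) (T : Subobject Y), ex S ≤ T ↔ S ≤ pb T
  gc_all : ∀ (T : Subobject Y) (S : Subobject X), pb T ≤ S ↔ T ≤ all S

/-- A Heyting category: a regular category where each subobject lattice is a
Heyting algebra and each pullback map on subobjects has both adjoints. -/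
class HeytingCat (E : Type u) [Category.{v} E] : Prop where
  toRegularCat : RegularCat E
  heyting : ∀ X : E, Nonempty (HeytingOn (Subobject X))
  adjoints : ∀ {X Y : E} (f : X ⟶ Y), Nonempty (SubAdjoints f)

attribute [instance] HeytingCat.toRegularCat

/-- A regular functor: preserves finite limits and covers (regular epis). -/
structure IsRegularFunctor {C : Type u₁} [Category.{v₁} C] {D : Type u₂} [Category.{v₂} D]
    (F : C ⥤ D) : Prop where
  preservesFiniteLimits : PreservesFiniteLimits F
  preservesCovers : ∀ {X Y : C} (f : X ⟶ Y), IsCover f → IsCover (F.map f)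

/-- The image of a subobject under a functor (defaults to `⊤` if the functor fails
to preserve the monomorphism). -/
noncomputable def mapSub {C : Type u₁} [Category.{v₁} C] {D : Type u₂} [Category.{v₂} D]
    (F : C ⥤ D) {X : C} (S : Subobject X) : Subobject (F.obj X) :=
  haveI := Classical.propDecidable (Mono (F.map S.arrow))
  if h : Mono (F.map S.arrow) then @Subobject.mk _ _ _ _ (F.map S.arrow) h else ⊤

section OPAS

variable (E) [HasFiniteLimits E]

/-- An ordered partial applicative structure internal to `E`: a partial order `le`
and a monotone partial binary application with downward closed domain, all
expressed via generalized elements. -/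
structure OPAS where
  A : E
  le : Subobject (A ⨯ A)
  le_refl : ∀ {Γ : E} (x : Γ ⟶ A), le.Factors (prod.lift x x)
  le_antisymm : ∀ {Γ : E} (x y : Γ ⟶ A),
    le.Factors (prod.lift x y) → le.Factors (prod.lift y x) → x = y
  le_trans : ∀ {Γ : E} (x y z : Γ ⟶ A),
    le.Factors (prod.lift x y) → le.Factors (prod.lift y z) → le.Factors (prod.lift x z)
  dom : Subobject (A ⨯ A)
  app : (dom : E) ⟶ A
  dom_down : ∀ {Γ : E} (a b c d : Γ ⟶ A),
    le.Factors (prod.lift a b) → le.Factors (prod.lift c d) →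
    dom.Factors (prod.lift b d) → dom.Factors (prod.lift a c)
  app_mono : ∀ {Γ : E} (a b c d : Γ ⟶ A) (hab : le.Factors (prod.lift a b))
    (hcd : le.Factors (prod.lift c d)) (h : dom.Factors (prod.lift b d)),
    le.Factors (prod.lift (dom.factorThru (prod.lift a c) (dom_down a b c d hab hcd h) ≫ app)
      (dom.factorThru (prod.lift b d) h ≫ app))

end OPAS

variable [HasFiniteLimits E]

/-- `x ≤ y` for generalized elements of an OPAS. -/
def OPAS.Le (S : OPAS E) {Γ : E} (x y : Γ ⟶ S.A) : Prop := S.le.Factors (prod.lift x y)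

/-- `x · y ↓ z` for generalized elements of an OPAS. -/
def OPAS.App (S : OPAS E) {Γ : E} (x y z : Γ ⟶ S.A) : Prop :=
  ∃ h : S.dom.Factors (prod.lift x y), S.dom.factorThru (prod.lift x y) h ≫ S.app = z

/-- Applicative terms in `n` variables (built from projections/variables by
pointwise application); these present the partial combinatory arrows `Aⁿ ⇀ A`. -/
inductive PTerm : ℕ → Type where
  | var {n : ℕ} : Fin n → PTerm n
  | app {n : ℕ} : PTerm n → PTerm n → PTerm n

/-- Weakening of an applicative term. -/
def PTerm.weaken : {n : ℕ} → PTerm n → PTerm (n + 1)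
  | _, .var i => .var i.castSucc
  | _, .app s t => .app s.weaken t.weaken

/-- The term `x₀ x₁ ⋯ xₙ` (iterated application of the extra first variable). -/
def iterTerm : (n : ℕ) → PTerm (n + 1)
  | 0 => .var 0
  | n + 1 => .app (iterTerm n).weaken (.var (Fin.last (n + 1)))

/-- Evaluation (Kleene equality style) of an applicative term on generalized
elements of an OPAS. -/
def OPAS.Eval (S : OPAS E) {Γ : E} : {n : ℕ} → PTerm n → (Fin n → (Γ ⟶ S.A)) → (Γ ⟶ S.A) → Prop
  | _, .var i, x, z => z = x i
  | _, .app s t, x, z => ∃ u v, S.Eval s x u ∧ S.Eval t x v ∧ S.App u v z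

/-- `r` represents the partial combinatory arrow `t` (at its stage of definition):
at every later stage, whenever `t` is defined on a tuple `x` with value `v`, the
iterated application `r x₁ ⋯ xₙ` is defined with value `≤ v`. -/
def OPAS.RepresentsAt (S : OPAS E) {n : ℕ} (t : PTerm n) {Γ : E} (r : Γ ⟶ S.A) : Prop :=
  ∀ (Δ : E) (g : Δ ⟶ Γ) (x : Fin n → (Δ ⟶ S.A)) (v : Δ ⟶ S.A),
    S.Eval t x v → ∃ y : Δ ⟶ S.A, S.Le y v ∧ S.Eval (iterTerm n) (Fin.cons (g ≫ r) x) y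

/-- A subobject is inhabited when its support is the whole terminal object. -/
def Inhab {X : E} (U : Subobject X) : Prop :=
  ∃ (Γ : E) (e : Γ ⟶ ⊤_ E) (a : Γ ⟶ X), IsCover e ∧ U.Factors a

/-- Two subobjects intersect when their intersection is inhabited. -/
def Intersects {X : E} (U V : Subobject X) : Prop :=
  ∃ (Γ : E) (e : Γ ⟶ ⊤_ E) (a : Γ ⟶ X), IsCover e ∧ U.Factors a ∧ V.Factors a

/-- An ordered partial combinatory algebra: an OPAS in which every partial
combinatory arrow is representable (the object of realizers is inhabited). -/
structure OPCA (E : Type u) [Category.{v} E] [HasFiniteLimits E] extends OPAS E where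
  complete : ∀ {n : ℕ} (t : PTerm n), ∃ (Γ : E) (e : Γ ⟶ ⊤_ E) (r : Γ ⟶ toOPAS.A),
    IsCover e ∧ toOPAS.RepresentsAt t r

/-- An OPCA pair `(A', A)`: an OPAS `A` with a subobject `A'` that is closed under
the application of `A` and such that the object of realizers of every partial
combinatory arrow of `A` intersects `A'`. -/
structure OPCAPair (E : Type u) [Category.{v} E] [HasFiniteLimits E] where
  S : OPAS E
  A' : Subobject S.A
  closed : ∀ {Γ : E} (x y z : Γ ⟶ S.A),
    A'.Factors x → A'.Factors y → S.App x y z → A'.Factors z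
  complete : ∀ {n : ℕ} (t : PTerm n), ∃ (Γ : E) (e : Γ ⟶ ⊤_ E) (r : Γ ⟶ S.A),
    IsCover e ∧ A'.Factors r ∧ S.RepresentsAt t r

/-- The underlying object of realizers of an OPCA pair. -/
abbrev OPCAPair.A (P : OPCAPair E) : E := P.S.A

/-- An `F`-filter for a regular functor `F` out of `E`: a subobject of `F A` that
is upward closed, closed under application, and meets `F U` whenever `U ⊆ A`
intersects `A'`. -/
structure RFilter {C : Type u₁} [Category.{v₁} C] (P : OPCAPair E) (F : E ⥤ C) where
  carrier : Subobject (F.obj P.A)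
  upward : ∀ {Γ : C} (p : Γ ⟶ F.obj (P.A ⨯ P.A)),
    (mapSub F P.S.le).Factors p → carrier.Factors (p ≫ F.map prod.fst) →
    carrier.Factors (p ≫ F.map prod.snd)
  app_closed : ∀ {Γ : C} (p : Γ ⟶ F.obj ((P.S.dom : E))),
    carrier.Factors (p ≫ F.map (P.S.dom.arrow ≫ prod.fst)) →
    carrier.Factors (p ≫ F.map (P.S.dom.arrow ≫ prod.snd)) →
    carrier.Factors (p ≫ F.map P.S.app)
  meets : ∀ U : Subobject P.A, Intersects U P.A' →
    ∃ (Γ : C) (e : Γ ⟶ F.obj (⊤_ E)) (a : Γ ⟶ F.obj P.A),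
      IsCover e ∧ (mapSub F U).Factors a ∧ carrier.Factors a

/-- A morphism of regular models `(F, Cf) → (G, Df)`: the isomorphism `η`
restricts to an isomorphism between the image of the filter `Cf` and `Df`. -/
def FilterIso {C : Type u₁} [Category.{v₁} C] {D : Type u₂} [Category.{v₂} D]
    (P : OPCAPair E) (F : E ⥤ C) (G : E ⥤ D) (Cf : RFilter P F) (Df : RFilter P G)
    (H : C ⥤ D) (η : F ⋙ H ≅ G) : Prop :=
  Subobject.mk ((mapSub H Cf.carrier).arrow ≫ η.hom.app P.A) = Df.carrier

end RRC

namespace RRC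

open CategoryTheory CategoryTheory.Limits

/-- A relational first-order language. -/
structure RegLang where
  Rel : Type
  arity : Rel → ℕ

/-- Regular formulas in context `n`: built from `⊤`, equality, relation symbols,
`∧` and `∃`. -/
inductive RegFormula (L : RegLang) : ℕ → Type
  | verum {n : ℕ} : RegFormula L n
  | eq {n : ℕ} : Fin n → Fin n → RegFormula L n
  | rel {n : ℕ} (r : L.Rel) : (Fin (L.arity r) → Fin n) → RegFormula L n
  | and {n : ℕ} : RegFormula L n → RegFormula L n → RegFormula L n
  | ex {n : ℕ} : RegFormula L (n + 1) → RegFormula L n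

/-- A regular sequent `φ ⊢ ψ` in context `ctx`. -/
structure RegSequent (L : RegLang) where
  ctx : ℕ
  lhs : RegFormula L ctx
  rhs : RegFormula L ctx

/-- A regular theory: a set of regular sequents. -/
structure RegTheory (L : RegLang) where
  axioms : Set (RegSequent L)

variable {E : Type u} [Category.{v} E] [HasFiniteLimits E]

/-- Finite powers of an object. -/
noncomputable def npow (A : E) : ℕ → E
  | 0 => ⊤_ E
  | n + 1 => A ⨯ npow A n

/-- Tupling of generalized elements. -/
noncomputable def tupleLift {A Γ : E} : {n : ℕ} → (Fin n → (Γ ⟶ A)) → (Γ ⟶ npow A n)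
  | 0, _ => terminal.from Γ
  | _ + 1, x => prod.lift (x 0) (tupleLift (fun i => x i.succ))

/-- An `L`-structure in a category: a carrier with an interpretation of each
relation symbol as a subobject of the corresponding finite power. -/
structure RegStructure (L : RegLang) (E : Type u) [Category.{v} E] [HasFiniteLimits E] where
  carrier : E
  interp : ∀ r : L.Rel, Subobject (npow carrier (L.arity r))

/-- Satisfaction of a regular formula on generalized elements; existential
quantification is interpreted by covers (regular epimorphisms). -/
def RegStructure.Sat {L : RegLang} (M : RegStructure L E) :
    {n : ℕ} → {Γ : E} → RegFormula L n → (Fin n → (Γ ⟶ M.carrier)) → Prop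
  | _, _, .verum, _ => True
  | _, _, .eq i j, x => x i = x j
  | _, _, .rel r f, x => (M.interp r).Factors (tupleLift (fun k => x (f k)))
  | _, _, .and φ ψ, x => M.Sat φ x ∧ M.Sat ψ x
  | _, Γ, .ex φ, x => ∃ (Δ : E) (e : Δ ⟶ Γ), IsCover e ∧
      ∃ w : Δ ⟶ M.carrier, M.Sat φ (Fin.snoc (fun i => e ≫ x i) w)

/-- A model of a regular theory. -/
def RegStructure.IsModel {L : RegLang} (M : RegStructure L E) (T : RegTheory L) : Prop :=
  ∀ s ∈ T.axioms, ∀ {Γ : E} (x : Fin s.ctx → (Γ ⟶ M.carrier)),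
    M.Sat s.lhs x → M.Sat s.rhs x

end RRC

namespace RRC

section Subobjects

variable {E : Type u} [Category.{v} E]

lemma isCover_id (X : E) : IsCover (𝟙 X) := ⟨RegularEpi.ofIso (Iso.refl X)⟩

lemma IsCover.epi {X Y : E} {q : X ⟶ Y} (hq : IsCover q) : Epi q := RegularEpi.epi q hq.some

lemma IsCover.factors_of_factors_comp {X Γ Δ : E} {q : Δ ⟶ Γ} (hq : IsCover q)
    {P : Subobject X} {f : Γ ⟶ X} (h : P.Factors (q ≫ f)) : P.Factors f := by
  have := isRegularEpi_of_regularEpi hq.some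
  have sq : CommSq (P.factorThru _ h) q P.arrow f := ⟨by simp⟩
  exact sq.fac_right ▸ Subobject.factors_comp_arrow _

lemma factors_mk_iff_exists {X Y Γ : E} (f : Y ⟶ X) [Mono f] (g : Γ ⟶ X) :
    (Subobject.mk f).Factors g ↔ ∃ k : Γ ⟶ Y, k ≫ f = g :=
  Iff.rfl

end Subobjects

section Tuples

variable {E : Type u} [Category.{v} E] [HasFiniteLimits E] {A Γ Δ : E}

noncomputable def npowProj (A : E) : {n : ℕ} → Fin n → (npow A n ⟶ A)
  | _ + 1, i => Fin.cases prod.fst (fun j => prod.snd ≫ npowProj A j) i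

@[simp]
lemma tupleLift_npowProj : ∀ {n : ℕ} (x : Fin n → (Γ ⟶ A)) (i : Fin n),
    tupleLift x ≫ npowProj A i = x i
  | _ + 1, x, i => by
    induction i using Fin.cases with
    | zero => exact prod.lift_fst _ _
    | succ j =>
      exact (Category.assoc (tupleLift x) _ _).symm.trans
        ((congrArg (· ≫ npowProj A j) (prod.lift_snd _ _)).trans (tupleLift_npowProj _ j))

lemma npow_hom_ext : ∀ {n : ℕ} {f g : Γ ⟶ npow A n},
    (∀ i, f ≫ npowProj A i = g ≫ npowProj A i) → f = g
  | 0, _, _, _ => terminal.hom_ext _ _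
  | _ + 1, _, _, h => prod.hom_ext (h 0) (npow_hom_ext fun j =>
    (Category.assoc _ _ _).trans ((h j.succ).trans (Category.assoc _ _ _).symm))

lemma comp_tupleLift (g : Δ ⟶ Γ) {n : ℕ} (x : Fin n → (Γ ⟶ A)) :
    g ≫ tupleLift x = tupleLift (fun i => g ≫ x i) :=
  npow_hom_ext fun i => by simp

lemma tupleLift_injective {n : ℕ} : Function.Injective (tupleLift (A := A) (Γ := Γ) (n := n)) :=
  fun x y h => funext fun i => by simpa using congrArg (· ≫ npowProj A i) h

lemma tupleLift_eta_three (f : Γ ⟶ npow A 3) :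
    tupleLift ![f ≫ npowProj A 0, f ≫ npowProj A 1, f ≫ npowProj A 2] = f :=
  npow_hom_ext fun i => by fin_cases i <;> simp

end Tuples

inductive OpcaRel : Type
  | le
  | app
  | realizer (n : ℕ) (t : PTerm n)

abbrev opcaLang : RegLang where
  Rel := OpcaRel
  arity
    | .le => 2
    | .app => 3
    | .realizer _ _ => 1

def leFml {m : ℕ} (i j : Fin m) : RegFormula opcaLang m := .rel OpcaRel.le ![i, j]

def appFml {m : ℕ} (i j k : Fin m) : RegFormula opcaLang m := .rel OpcaRel.app ![i, j, k]

def realizerFml {m n : ℕ} (t : PTerm n) (i : Fin m) : RegFormula opcaLang m :=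
  .rel (OpcaRel.realizer n t) ![i]

/-- `evalFml t inj out` expresses `t(x ∘ inj) ↓ x_out`; the two existentials bind the values of
the two immediate subterms. -/
def evalFml : {n m : ℕ} → PTerm n → (Fin n → Fin m) → Fin m → RegFormula opcaLang m
  | _, _, .var i, inj, out => .eq out (inj i)
  | _, m, .app s u, inj, out =>
      .ex (.ex (.and (evalFml s (fun i => (inj i).castSucc.castSucc) (Fin.last m).castSucc)
        (.and (evalFml u (fun i => (inj i).castSucc.castSucc) (Fin.last (m + 1)))
          (appFml (Fin.last m).castSucc (Fin.last (m + 1)) out.castSucc.castSucc))))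

def leReflAx : RegSequent opcaLang := ⟨1, .verum, leFml 0 0⟩

def leAntisymmAx : RegSequent opcaLang := ⟨2, .and (leFml 0 1) (leFml 1 0), .eq 0 1⟩

def leTransAx : RegSequent opcaLang := ⟨3, .and (leFml 0 1) (leFml 1 2), leFml 0 2⟩

def appFunctionalAx : RegSequent opcaLang := ⟨4, .and (appFml 0 1 2) (appFml 0 1 3), .eq 2 3⟩

/-- `x₀ ≤ x₁, x₂ ≤ x₃, x₁ x₃ ↓ x₄ ⊢ ∃ x₅, x₀ x₂ ↓ x₅ ∧ x₅ ≤ x₄`: downward closed domain and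
monotone application in one sequent. -/
def appMonoAx : RegSequent opcaLang :=
  ⟨5, .and (leFml 0 1) (.and (leFml 2 3) (appFml 1 3 4)), .ex (.and (appFml 0 2 5) (leFml 5 4))⟩

def realizerInhabitedAx {n : ℕ} (t : PTerm n) : RegSequent opcaLang :=
  ⟨0, .verum, .ex (realizerFml t 0)⟩

/-- In context `x₀ … xₙ₋₁, v, r`: `R_t(r) ∧ t(x⃗) ↓ v ⊢ ∃ y, y ≤ v ∧ r x₀ ⋯ xₙ₋₁ ↓ y`. -/
def realizerRepresentsAx {n : ℕ} (t : PTerm n) : RegSequent opcaLang :=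
  ⟨n + 2,
   .and (realizerFml t (Fin.last (n + 1)))
     (evalFml t (fun i => i.castSucc.castSucc) (Fin.last n).castSucc),
   .ex (.and (leFml (Fin.last (n + 2)) (Fin.last n).castSucc.castSucc)
     (evalFml (iterTerm n)
       (Fin.cases (Fin.last (n + 1)).castSucc (fun i => i.castSucc.castSucc.castSucc))
       (Fin.last (n + 2))))⟩

def opcaTheory : RegTheory opcaLang where
  axioms := {leReflAx, leAntisymmAx, leTransAx, appFunctionalAx, appMonoAx} ∪
    ⋃ (n : ℕ) (t : PTerm n), {realizerInhabitedAx t, realizerRepresentsAx t}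

namespace RegStructure

variable {E : Type u} [Category.{v} E] [HasFiniteLimits E]

def Satisfies {L : RegLang} (M : RegStructure L E) (s : RegSequent L) : Prop :=
  ∀ {Γ : E} (x : Fin s.ctx → (Γ ⟶ M.carrier)), M.Sat s.lhs x → M.Sat s.rhs x

lemma isModel_opcaTheory_iff (M : RegStructure opcaLang E) :
    M.IsModel opcaTheory ↔
      M.Satisfies leReflAx ∧ M.Satisfies leAntisymmAx ∧ M.Satisfies leTransAx ∧
        M.Satisfies appFunctionalAx ∧ M.Satisfies appMonoAx ∧
        ∀ {n : ℕ} (t : PTerm n),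
          M.Satisfies (realizerInhabitedAx t) ∧ M.Satisfies (realizerRepresentsAx t) := by
  change opcaTheory.axioms ⊆ {s | M.Satisfies s} ↔ _
  simp only [opcaTheory, Set.union_subset_iff, Set.iUnion_subset_iff, Set.insert_subset_iff,
    Set.singleton_subset_iff, Set.mem_ofPred_eq, and_assoc]

variable (M : RegStructure opcaLang E) {Γ Δ : E}

def Le (x y : Γ ⟶ M.carrier) : Prop := (M.interp OpcaRel.le).Factors (tupleLift ![x, y])

def App (x y z : Γ ⟶ M.carrier) : Prop := (M.interp OpcaRel.app).Factors (tupleLift ![x, y, z])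

def Realizer {n : ℕ} (t : PTerm n) (r : Γ ⟶ M.carrier) : Prop :=
  (M.interp (OpcaRel.realizer n t)).Factors (tupleLift ![r])

variable {M}

lemma Realizer.comp (g : Δ ⟶ Γ) {n : ℕ} {t : PTerm n} {r : Γ ⟶ M.carrier}
    (h : M.Realizer t r) : M.Realizer t (g ≫ r) := by
  have := Subobject.factors_of_factors_right g h
  rwa [comp_tupleLift, show (fun i => g ≫ ![r] i) = ![g ≫ r] by
    ext i; fin_cases i; rfl] at this

lemma le_of_isCover {q : Δ ⟶ Γ} (hq : IsCover q) {x y : Γ ⟶ M.carrier}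
    (h : M.Le (q ≫ x) (q ≫ y)) : M.Le x y := by
  refine hq.factors_of_factors_comp ?_
  rwa [comp_tupleLift, show (fun i => q ≫ ![x, y] i) = ![q ≫ x, q ≫ y] by
    ext i; fin_cases i <;> rfl]

@[simp]
lemma sat_leFml {m : ℕ} (i j : Fin m) (x : Fin m → (Γ ⟶ M.carrier)) :
    M.Sat (leFml i j) x ↔ M.Le (x i) (x j) := by
  rw [leFml, Sat, show (fun k => x (![i, j] k)) = ![x i, x j] by ext k; fin_cases k <;> rfl]
  rfl

@[simp]
lemma sat_appFml {m : ℕ} (i j k : Fin m) (x : Fin m → (Γ ⟶ M.carrier)) :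
    M.Sat (appFml i j k) x ↔ M.App (x i) (x j) (x k) := by
  rw [appFml, Sat, show (fun l => x (![i, j, k] l)) = ![x i, x j, x k] by
    ext l; fin_cases l <;> rfl]
  rfl

@[simp]
lemma sat_realizerFml {m n : ℕ} (t : PTerm n) (i : Fin m) (x : Fin m → (Γ ⟶ M.carrier)) :
    M.Sat (realizerFml t i) x ↔ M.Realizer t (x i) := by
  rw [realizerFml, Sat, show (fun l => x (![i] l)) = ![x i] by ext l; fin_cases l; rfl]
  rfl

lemma satisfies_leReflAx_iff : M.Satisfies leReflAx ↔ ∀ {Γ : E} (x : Γ ⟶ M.carrier), M.Le x x := by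
  dsimp only [Satisfies, leReflAx]
  exact ⟨fun h _ x => by simpa using h ![x] trivial, fun h _ x _ => by simpa using h (x 0)⟩

lemma satisfies_leAntisymmAx_iff : M.Satisfies leAntisymmAx ↔
    ∀ {Γ : E} (x y : Γ ⟶ M.carrier), M.Le x y → M.Le y x → x = y := by
  dsimp only [Satisfies, leAntisymmAx]
  refine ⟨fun h _ x y hxy hyx => ?_, fun h _ x hx => ?_⟩
  · simpa [Sat] using h ![x, y] (by simpa [Sat] using ⟨hxy, hyx⟩)
  · simp only [Sat, sat_leFml] at hx ⊢
    exact h _ _ hx.1 hx.2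

lemma satisfies_leTransAx_iff : M.Satisfies leTransAx ↔
    ∀ {Γ : E} (x y z : Γ ⟶ M.carrier), M.Le x y → M.Le y z → M.Le x z := by
  dsimp only [Satisfies, leTransAx]
  refine ⟨fun h _ x y z hxy hyz => ?_, fun h _ x hx => ?_⟩
  · simpa [Sat] using h ![x, y, z] (by simpa [Sat] using ⟨hxy, hyz⟩)
  · simp only [Sat, sat_leFml] at hx ⊢
    exact h _ _ _ hx.1 hx.2

lemma satisfies_appFunctionalAx_iff : M.Satisfies appFunctionalAx ↔
    ∀ {Γ : E} (x y z z' : Γ ⟶ M.carrier), M.App x y z → M.App x y z' → z = z' := by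
  dsimp only [Satisfies, appFunctionalAx]
  refine ⟨fun h _ x y z z' hz hz' => ?_, fun h _ x hx => ?_⟩
  · simpa [Sat] using h ![x, y, z, z'] (by simpa [Sat] using ⟨hz, hz'⟩)
  · simp only [Sat, sat_appFml] at hx ⊢
    exact h _ _ _ _ hx.1 hx.2

lemma satisfies_appMonoAx_iff : M.Satisfies appMonoAx ↔
    ∀ {Γ : E} (a b c d e : Γ ⟶ M.carrier), M.Le a b → M.Le c d → M.App b d e →
      ∃ (Δ : E) (q : Δ ⟶ Γ), IsCover q ∧ ∃ f, M.App (q ≫ a) (q ≫ c) f ∧ M.Le f (q ≫ e) := by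
  dsimp only [Satisfies, appMonoAx]
  refine ⟨fun h _ a b c d e hab hcd he => ?_, fun h _ x hx => ?_⟩
  · obtain ⟨Δ, q, hq, f, hf⟩ := h ![a, b, c, d, e] (by simpa [Sat] using ⟨hab, hcd, he⟩)
    simp only [Sat, sat_leFml, sat_appFml, Fin.snoc] at hf
    exact ⟨Δ, q, hq, f, hf⟩
  · simp only [Sat, sat_leFml, sat_appFml] at hx ⊢
    obtain ⟨Δ, q, hq, f, hf⟩ := h _ _ _ _ _ hx.1 hx.2.1 hx.2.2
    refine ⟨Δ, q, hq, f, ?_⟩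
    simp only [Fin.snoc]
    exact hf

lemma satisfies_appMonoAx_of_exists_app_le (h : ∀ {Γ : E} (a b c d e : Γ ⟶ M.carrier),
      M.Le a b → M.Le c d → M.App b d e → ∃ f, M.App a c f ∧ M.Le f e) :
    M.Satisfies appMonoAx := by
  refine satisfies_appMonoAx_iff.2 fun a b c d e hab hcd hbde => ?_
  obtain ⟨f, hf, hfe⟩ := h a b c d e hab hcd hbde
  exact ⟨_, 𝟙 _, isCover_id _, f, by simpa using hf, by simpa using hfe⟩

lemma satisfies_realizerInhabitedAx_iff {n : ℕ} (t : PTerm n) :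
    M.Satisfies (realizerInhabitedAx t) ↔
      ∀ Γ : E, ∃ (Δ : E) (q : Δ ⟶ Γ), IsCover q ∧ ∃ r : Δ ⟶ M.carrier, M.Realizer t r := by
  simp [Satisfies, realizerInhabitedAx, Sat, Fin.snoc]

end RegStructure

section PartialApp

variable {E : Type u} [Category.{v} E] [HasFiniteLimits E] {A Γ Δ : E}
variable {D : Subobject (A ⨯ A)} {f : (D : E) ⟶ A}

variable (D f) in
/-- `x y ↓ z` for the partial binary operation `f` defined on `D`. -/
def PartialApp (x y z : Γ ⟶ A) : Prop :=
  ∃ h : D.Factors (prod.lift x y), D.factorThru (prod.lift x y) h ≫ f = z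

lemma partialApp_iff_exists {x y z : Γ ⟶ A} :
    PartialApp D f x y z ↔ ∃ k : Γ ⟶ D, k ≫ D.arrow = prod.lift x y ∧ k ≫ f = z := by
  refine ⟨fun ⟨h, hz⟩ => ⟨_, Subobject.factorThru_arrow _ _ h, hz⟩, fun ⟨k, hk, hz⟩ => ?_⟩
  have h : D.Factors (prod.lift x y) := hk ▸ Subobject.factors_comp_arrow k
  refine ⟨h, ?_⟩
  rw [← hz, ← cancel_mono D.arrow |>.mp (by simp [hk] :
    D.factorThru _ h ≫ D.arrow = k ≫ D.arrow)]

lemma PartialApp.unique {x y z z' : Γ ⟶ A} (h : PartialApp D f x y z)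
    (h' : PartialApp D f x y z') : z = z' := by
  obtain ⟨_, rfl⟩ := h
  obtain ⟨_, rfl⟩ := h'
  rfl

lemma PartialApp.comp (g : Δ ⟶ Γ) {x y z : Γ ⟶ A} (h : PartialApp D f x y z) :
    PartialApp D f (g ≫ x) (g ≫ y) (g ≫ z) := by
  obtain ⟨k, hk, rfl⟩ := partialApp_iff_exists.1 h
  exact partialApp_iff_exists.2 ⟨g ≫ k, by simp [hk], by simp⟩

lemma PartialApp.descend {q : Δ ⟶ Γ} (hq : IsCover q) {x y : Γ ⟶ A} {v : Δ ⟶ A}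
    (h : PartialApp D f (q ≫ x) (q ≫ y) v) : ∃ v₀ : Γ ⟶ A, v = q ≫ v₀ ∧ PartialApp D f x y v₀ := by
  obtain ⟨hd, rfl⟩ := h
  have hd₀ : D.Factors (prod.lift x y) := hq.factors_of_factors_comp (by rwa [prod.comp_lift])
  exact ⟨_, (PartialApp.comp q ⟨hd₀, rfl⟩).unique ⟨hd, rfl⟩ |>.symm, hd₀, rfl⟩

end PartialApp

namespace OPAS

variable {E : Type u} [Category.{v} E] [HasFiniteLimits E] {S : OPAS E} {Γ Δ : E}

lemma exists_app_le {a b c d e : Γ ⟶ S.A} (hab : S.Le a b) (hcd : S.Le c d)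
    (hbde : S.App b d e) : ∃ f, S.App a c f ∧ S.Le f e := by
  obtain ⟨hbd, rfl⟩ := hbde
  exact ⟨_, ⟨S.dom_down a b c d hab hcd hbd, rfl⟩, S.app_mono a b c d hab hcd hbd⟩

lemma le_of_isCover {q : Δ ⟶ Γ} (hq : IsCover q) {x y : Γ ⟶ S.A} (h : S.Le (q ≫ x) (q ≫ y)) :
    S.Le x y :=
  hq.factors_of_factors_comp (by rwa [prod.comp_lift])

lemma eval_var {n : ℕ} (i : Fin n) (x : Fin n → (Γ ⟶ S.A)) (z : Γ ⟶ S.A) :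
    S.Eval (.var i) x z ↔ z = x i := by
  rw [Eval]

lemma eval_app {n : ℕ} (s u : PTerm n) (x : Fin n → (Γ ⟶ S.A)) (z : Γ ⟶ S.A) :
    S.Eval (.app s u) x z ↔ ∃ a b, S.Eval s x a ∧ S.Eval u x b ∧ S.App a b z := by
  rw [Eval]

lemma Eval.comp (g : Δ ⟶ Γ) {n : ℕ} {t : PTerm n} {x : Fin n → (Γ ⟶ S.A)} {v : Γ ⟶ S.A}
    (h : S.Eval t x v) : S.Eval t (fun i => g ≫ x i) (g ≫ v) := by
  induction t generalizing v with
  | var i => exact (eval_var ..).2 (by rw [(eval_var ..).1 h])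
  | app s u ihs ihu =>
    obtain ⟨a, b, ha, hb, hab⟩ := (eval_app ..).1 h
    exact (eval_app ..).2 ⟨g ≫ a, g ≫ b, ihs ha, ihu hb, PartialApp.comp g hab⟩

lemma Eval.descend {q : Δ ⟶ Γ} (hq : IsCover q) {n : ℕ} {t : PTerm n}
    {x : Fin n → (Γ ⟶ S.A)} {v : Δ ⟶ S.A} (h : S.Eval t (fun i => q ≫ x i) v) :
    ∃ v₀ : Γ ⟶ S.A, v = q ≫ v₀ ∧ S.Eval t x v₀ := by
  induction t generalizing v with
  | var i => exact ⟨x i, (eval_var ..).1 h, (eval_var ..).2 rfl⟩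
  | app s u ihs ihu =>
    obtain ⟨a, b, ha, hb, hab⟩ := (eval_app ..).1 h
    obtain ⟨a₀, rfl, ha₀⟩ := ihs ha
    obtain ⟨b₀, rfl, hb₀⟩ := ihu hb
    obtain ⟨v₀, rfl, hv₀⟩ := PartialApp.descend hq hab
    exact ⟨v₀, rfl, (eval_app ..).2 ⟨a₀, b₀, ha₀, hb₀, hv₀⟩⟩

lemma Eval.of_comp_isCover {q : Δ ⟶ Γ} (hq : IsCover q) {n : ℕ} {t : PTerm n}
    {x : Fin n → (Γ ⟶ S.A)} {v : Γ ⟶ S.A} (h : S.Eval t (fun i => q ≫ x i) (q ≫ v)) :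
    S.Eval t x v := by
  have := hq.epi
  obtain ⟨v₀, hv, h₀⟩ := h.descend hq
  rwa [(cancel_epi q).1 hv]

end OPAS

namespace OPAS

variable {E : Type u} [Category.{v} E] [HasFiniteLimits E] (S : OPAS E)

abbrev toRegStructure (I : ∀ r : OpcaRel, Subobject (npow S.A (opcaLang.arity r))) :
    RegStructure opcaLang E :=
  ⟨S.A, I⟩

structure Interprets (I : ∀ r : OpcaRel, Subobject (npow S.A (opcaLang.arity r))) : Prop where
  le_iff : ∀ {Γ : E} (x y : Γ ⟶ S.A), (S.toRegStructure I).Le x y ↔ S.Le x y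
  app_iff : ∀ {Γ : E} (x y z : Γ ⟶ S.A), (S.toRegStructure I).App x y z ↔ S.App x y z

variable {S} {I : ∀ r : OpcaRel, Subobject (npow S.A (opcaLang.arity r))}

lemma Interprets.sat_evalFml_iff (hI : S.Interprets I) {n : ℕ} (t : PTerm n) {m : ℕ}
    (inj : Fin n → Fin m) (out : Fin m) {Γ : E} (x : Fin m → (Γ ⟶ S.A)) :
    (S.toRegStructure I).Sat (evalFml t inj out) x ↔ S.Eval t (fun i => x (inj i)) (x out) := by
  induction t generalizing m Γ with
  | var i => rw [evalFml, RegStructure.Sat, eval_var]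
  | app s u ihs ihu =>
    simp only [evalFml, RegStructure.Sat, ihs, ihu, RegStructure.sat_appFml, hI.app_iff, eval_app,
      Fin.snoc_castSucc, Fin.snoc_last]
    constructor
    · rintro ⟨Δ, e, he, a, Δ', e', he', b, hs, hu, hab⟩
      exact (eval_app ..).1
        (((eval_app ..).2 ⟨_, _, hs, hu, hab⟩).of_comp_isCover he' |>.of_comp_isCover he)
    · rintro ⟨a, b, ha, hb, hab⟩
      exact ⟨Γ, 𝟙 Γ, isCover_id Γ, a, Γ, 𝟙 Γ, isCover_id Γ, b, by simpa using ha,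
        by simpa using hb, by simpa using hab⟩

variable (S) in
/-- The conclusion of `realizerRepresentsAx`: `r` represents `t` after passing to a cover. -/
def LocallyRepresents {n : ℕ} (t : PTerm n) {Γ : E} (r : Γ ⟶ S.A) : Prop :=
  ∀ (x : Fin n → (Γ ⟶ S.A)) (v : Γ ⟶ S.A), S.Eval t x v →
    ∃ (Δ : E) (q : Δ ⟶ Γ), IsCover q ∧ ∃ y : Δ ⟶ S.A,
      S.Le y (q ≫ v) ∧ S.Eval (iterTerm n) (Fin.cons (q ≫ r) fun i => q ≫ x i) y

lemma representsAt_of_locallyRepresents {n : ℕ} {t : PTerm n} {Γ : E} {r : Γ ⟶ S.A}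
    (h : ∀ {Δ : E} (g : Δ ⟶ Γ), S.LocallyRepresents t (g ≫ r)) : S.RepresentsAt t r := by
  intro Δ g x v hx
  obtain ⟨Δ', q, hq, y, hy, hev⟩ := h g x v hx
  have hargs : (Fin.cons (q ≫ g ≫ r) fun i => q ≫ x i : Fin (n + 1) → (Δ' ⟶ S.A)) =
      fun i => q ≫ (Fin.cons (g ≫ r) x : Fin (n + 1) → (Δ ⟶ S.A)) i := by
    funext i
    induction i using Fin.cases <;> simp
  obtain ⟨y₀, rfl, hy₀⟩ := Eval.descend hq (hargs ▸ hev)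
  exact ⟨y₀, le_of_isCover hq hy, hy₀⟩

lemma Interprets.sat_realizerRepresentsAx_lhs_iff (hI : S.Interprets I) {n : ℕ} (t : PTerm n)
    {Γ : E} (x : Fin n → (Γ ⟶ S.A)) (v r : Γ ⟶ S.A) :
    (S.toRegStructure I).Sat (realizerRepresentsAx t).lhs (Fin.snoc (Fin.snoc x v) r) ↔
      (S.toRegStructure I).Realizer t r ∧ S.Eval t x v := by
  simp [realizerRepresentsAx, RegStructure.Sat, hI.sat_evalFml_iff]

lemma Interprets.sat_realizerRepresentsAx_rhs_iff (hI : S.Interprets I) {n : ℕ} (t : PTerm n)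
    {Γ : E} (x : Fin n → (Γ ⟶ S.A)) (v r : Γ ⟶ S.A) :
    (S.toRegStructure I).Sat (realizerRepresentsAx t).rhs (Fin.snoc (Fin.snoc x v) r) ↔
      ∃ (Δ : E) (q : Δ ⟶ Γ), IsCover q ∧ ∃ y : Δ ⟶ S.A,
        S.Le y (q ≫ v) ∧ S.Eval (iterTerm n) (Fin.cons (q ≫ r) fun i => q ≫ x i) y := by
  have hargs : ∀ {Δ : E} (q : Δ ⟶ Γ) (y : Δ ⟶ S.A),
      (fun i : Fin (n + 1) =>
        (Fin.snoc (fun j => q ≫ (Fin.snoc (Fin.snoc x v) r : Fin (n + 2) → (Γ ⟶ S.A)) j) y :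
          Fin (n + 3) → (Δ ⟶ S.A))
        (Fin.cases (Fin.last (n + 1)).castSucc (fun i => i.castSucc.castSucc.castSucc) i)) =
      (Fin.cons (q ≫ r) fun i => q ≫ x i : Fin (n + 1) → (Δ ⟶ S.A)) := by
    intro Δ q y
    funext i
    induction i using Fin.cases <;> simp
  simp [realizerRepresentsAx, RegStructure.Sat, hI.sat_evalFml_iff, hI.le_iff, hargs]

lemma Interprets.satisfies_realizerRepresentsAx_iff (hI : S.Interprets I) {n : ℕ} (t : PTerm n) :
    (S.toRegStructure I).Satisfies (realizerRepresentsAx t) ↔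
      ∀ {Γ : E} (r : Γ ⟶ S.A), (S.toRegStructure I).Realizer t r → S.LocallyRepresents t r := by
  refine ⟨fun h Γ r hr x v hx => (hI.sat_realizerRepresentsAx_rhs_iff t x v r).1
    (h _ ((hI.sat_realizerRepresentsAx_lhs_iff t x v r).2 ⟨hr, hx⟩)), fun h Γ y => ?_⟩
  change Fin (n + 2) → (Γ ⟶ S.A) at y
  induction y using Fin.snocCases with | snoc y r => ?_
  induction y using Fin.snocCases with | snoc x v => ?_
  intro hlhs
  obtain ⟨hr, hx⟩ := (hI.sat_realizerRepresentsAx_lhs_iff t x v r).1 hlhs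
  exact (hI.sat_realizerRepresentsAx_rhs_iff t x v r).2 (h r hr x v hx)

end OPAS

section FunctionalRelation

variable {E : Type u} [Category.{v} E] [HasFiniteLimits E] {A : E}

def IsFunctionalRel (R : Subobject (npow A 3)) : Prop :=
  ∀ ⦃Γ : E⦄ (x y z z' : Γ ⟶ A),
    R.Factors (tupleLift ![x, y, z]) → R.Factors (tupleLift ![x, y, z']) → z = z'

namespace IsFunctionalRel

variable {R : Subobject (npow A 3)} {Γ : E}

lemma mono_args (hR : IsFunctionalRel R) :
    Mono (R.arrow ≫ prod.lift (npowProj A 0) (npowProj A 1)) := by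
  refine ⟨fun {Γ} u v huv => (cancel_mono R.arrow).1 (npow_hom_ext fun i => ?_)⟩
  have h₀ := congrArg (· ≫ prod.fst) huv
  have h₁ := congrArg (· ≫ prod.snd) huv
  simp only [Category.assoc, prod.lift_fst, prod.lift_snd] at h₀ h₁
  have hR' : ∀ w : Γ ⟶ R, R.Factors (tupleLift ![w ≫ R.arrow ≫ npowProj A 0,
      w ≫ R.arrow ≫ npowProj A 1, w ≫ R.arrow ≫ npowProj A 2]) := fun w => by
    simpa only [← Category.assoc, tupleLift_eta_three] using Subobject.factors_comp_arrow w
  have h₂ := hR _ _ _ _ (hR' u) (h₀ ▸ h₁ ▸ hR' v)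
  fin_cases i <;> simpa using ‹_›

noncomputable def dom (hR : IsFunctionalRel R) : Subobject (A ⨯ A) :=
  haveI := hR.mono_args
  Subobject.mk (R.arrow ≫ prod.lift (npowProj A 0) (npowProj A 1))

noncomputable def app (hR : IsFunctionalRel R) : (hR.dom : E) ⟶ A :=
  haveI := hR.mono_args
  (Subobject.underlyingIso _).hom ≫ R.arrow ≫ npowProj A 2

lemma factors_iff_partialApp (hR : IsFunctionalRel R) (x y z : Γ ⟶ A) :
    R.Factors (tupleLift ![x, y, z]) ↔ PartialApp hR.dom hR.app x y z := by
  have := hR.mono_args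
  have hmk := Subobject.underlyingIso_hom_comp_eq_mk
    (R.arrow ≫ prod.lift (npowProj A 0) (npowProj A 1))
  rw [partialApp_iff_exists]
  unfold dom app
  constructor
  · intro h
    refine ⟨R.factorThru _ h ≫ (Subobject.underlyingIso _).inv, ?_, ?_⟩
    · simp [← hmk]
    · erw [Category.assoc, Iso.inv_hom_id_assoc, Subobject.factorThru_arrow_assoc]
      simp
  · rintro ⟨k, hk, rfl⟩
    rw [← hmk] at hk
    have h₀ := congrArg (· ≫ prod.fst) hk
    have h₁ := congrArg (· ≫ prod.snd) hk
    simp only [Category.assoc, prod.lift_fst, prod.lift_snd] at h₀ h₁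
    have hj := tupleLift_eta_three ((k ≫ (Subobject.underlyingIso _).hom) ≫ R.arrow)
    simp only [Category.assoc, h₀, h₁] at hj
    erw [hj]
    exact Subobject.factors_of_factors_right k (Subobject.factors_comp_arrow _)

end IsFunctionalRel

end FunctionalRelation

namespace RegStructure

variable {E : Type u} [Category.{v} E] [HasFiniteLimits E] (M : RegStructure opcaLang E)

noncomputable def leSubobject : Subobject (M.carrier ⨯ M.carrier) :=
  (Subobject.pullback (tupleLift ![prod.fst, prod.snd])).obj (M.interp OpcaRel.le)

lemma leSubobject_factors_iff {Γ : E} (x y : Γ ⟶ M.carrier) :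
    M.leSubobject.Factors (prod.lift x y) ↔ M.Le x y := by
  rw [leSubobject, pullback_factors_iff, comp_tupleLift,
    show (fun i => prod.lift x y ≫ ![prod.fst, prod.snd] i) = ![x, y] by
      ext i; fin_cases i
      exacts [prod.lift_fst x y, prod.lift_snd x y]]
  rfl

variable {M}

namespace IsModel

variable {Γ : E}

lemma le_refl (hM : M.IsModel opcaTheory) (x : Γ ⟶ M.carrier) : M.Le x x :=
  satisfies_leReflAx_iff.1 (M.isModel_opcaTheory_iff.1 hM).1 x

lemma le_antisymm (hM : M.IsModel opcaTheory) {x y : Γ ⟶ M.carrier} :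
    M.Le x y → M.Le y x → x = y :=
  satisfies_leAntisymmAx_iff.1 (M.isModel_opcaTheory_iff.1 hM).2.1 x y

lemma le_trans (hM : M.IsModel opcaTheory) {x y z : Γ ⟶ M.carrier} :
    M.Le x y → M.Le y z → M.Le x z :=
  satisfies_leTransAx_iff.1 (M.isModel_opcaTheory_iff.1 hM).2.2.1 x y z

lemma isFunctionalRel_app (hM : M.IsModel opcaTheory) : IsFunctionalRel (M.interp OpcaRel.app) :=
  fun _ => satisfies_appFunctionalAx_iff.1 (M.isModel_opcaTheory_iff.1 hM).2.2.2.1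

lemma exists_app_le (hM : M.IsModel opcaTheory) {a b c d e : Γ ⟶ M.carrier} (hab : M.Le a b)
    (hcd : M.Le c d) (hbde : M.App b d e) : ∃ f, M.App a c f ∧ M.Le f e := by
  obtain ⟨Δ, q, hq, f, hf, hfe⟩ :=
    satisfies_appMonoAx_iff.1 (M.isModel_opcaTheory_iff.1 hM).2.2.2.2.1 a b c d e hab hcd hbde
  have hR := hM.isFunctionalRel_app
  obtain ⟨f₀, rfl, hf₀⟩ := PartialApp.descend hq ((hR.factors_iff_partialApp _ _ _).1 hf)
  exact ⟨f₀, (hR.factors_iff_partialApp _ _ _).2 hf₀, le_of_isCover hq hfe⟩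

lemma exists_isCover_realizer (hM : M.IsModel opcaTheory) {n : ℕ} (t : PTerm n) (Γ : E) :
    ∃ (Δ : E) (q : Δ ⟶ Γ), IsCover q ∧ ∃ r : Δ ⟶ M.carrier, M.Realizer t r :=
  (satisfies_realizerInhabitedAx_iff t).1 ((M.isModel_opcaTheory_iff.1 hM).2.2.2.2.2 t).1 Γ

lemma satisfies_realizerRepresentsAx (hM : M.IsModel opcaTheory) {n : ℕ} (t : PTerm n) :
    M.Satisfies (realizerRepresentsAx t) :=
  ((M.isModel_opcaTheory_iff.1 hM).2.2.2.2.2 t).2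

end IsModel

noncomputable def toOPAS (hM : M.IsModel opcaTheory) : OPAS E where
  A := M.carrier
  le := M.leSubobject
  le_refl x := (M.leSubobject_factors_iff x x).2 (hM.le_refl x)
  le_antisymm x y hxy hyx :=
    hM.le_antisymm ((M.leSubobject_factors_iff x y).1 hxy) ((M.leSubobject_factors_iff y x).1 hyx)
  le_trans x y z hxy hyz := (M.leSubobject_factors_iff x z).2
    (hM.le_trans ((M.leSubobject_factors_iff x y).1 hxy) ((M.leSubobject_factors_iff y z).1 hyz))
  dom := hM.isFunctionalRel_app.dom
  app := hM.isFunctionalRel_app.app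
  dom_down a b c d hab hcd hbd := by
    have hR := hM.isFunctionalRel_app
    obtain ⟨f, hf, -⟩ := hM.exists_app_le ((M.leSubobject_factors_iff a b).1 hab)
      ((M.leSubobject_factors_iff c d).1 hcd) ((hR.factors_iff_partialApp _ _ _).2 ⟨hbd, rfl⟩)
    exact ((hR.factors_iff_partialApp _ _ _).1 hf).1
  app_mono a b c d hab hcd hbd := by
    have hR := hM.isFunctionalRel_app
    obtain ⟨f, hf, hfe⟩ := hM.exists_app_le ((M.leSubobject_factors_iff a b).1 hab)
      ((M.leSubobject_factors_iff c d).1 hcd) ((hR.factors_iff_partialApp _ _ _).2 ⟨hbd, rfl⟩)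
    rw [PartialApp.unique ⟨_, rfl⟩ ((hR.factors_iff_partialApp _ _ _).1 hf)]
    exact (M.leSubobject_factors_iff _ _).2 hfe

lemma interprets_toOPAS (hM : M.IsModel opcaTheory) : (M.toOPAS hM).Interprets M.interp where
  le_iff x y := (M.leSubobject_factors_iff x y).symm
  app_iff x y z := hM.isFunctionalRel_app.factors_iff_partialApp x y z

noncomputable def toOPCA (hM : M.IsModel opcaTheory) : OPCA E where
  toOPAS := M.toOPAS hM
  complete t := by
    obtain ⟨Γ, q, hq, r, hr⟩ := hM.exists_isCover_realizer t (⊤_ E)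
    refine ⟨Γ, q, r, hq, OPAS.representsAt_of_locallyRepresents fun g => ?_⟩
    exact ((interprets_toOPAS hM).satisfies_realizerRepresentsAx_iff t).1
      (hM.satisfies_realizerRepresentsAx t) _ (hr.comp g)

end RegStructure

section Interpretation

variable {E : Type u} [Category.{v} E] [HasFiniteLimits E]

namespace OPAS

variable (S : OPAS E)

noncomputable def graph : (S.dom : E) ⟶ npow S.A 3 :=
  tupleLift ![S.dom.arrow ≫ prod.fst, S.dom.arrow ≫ prod.snd, S.app]

instance mono_graph : Mono S.graph :=
  ⟨fun u v huv => (cancel_mono S.dom.arrow).1 <| prod.hom_ext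
    (by simpa [graph] using congrArg (· ≫ npowProj S.A 0) huv)
    (by simpa [graph] using congrArg (· ≫ npowProj S.A 1) huv)⟩

noncomputable def interp (R : ∀ {n : ℕ}, PTerm n → Subobject S.A) :
    ∀ r : OpcaRel, Subobject (npow S.A (opcaLang.arity r))
  | .le => (Subobject.pullback (prod.lift (npowProj S.A 0) (npowProj S.A 1))).obj S.le
  | .app => Subobject.mk S.graph
  | .realizer _ t => (Subobject.pullback (npowProj S.A 0)).obj (R t)

variable {S} (R : ∀ {n : ℕ}, PTerm n → Subobject S.A)

lemma interprets_interp : S.Interprets (S.interp R) where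
  le_iff x y := by
    change Subobject.Factors (Subobject.pullback _ |>.obj _) _ ↔ _
    rw [pullback_factors_iff, prod.comp_lift, tupleLift_npowProj, tupleLift_npowProj]
    rfl
  app_iff x y z := by
    change (Subobject.mk S.graph).Factors _ ↔ _
    rw [factors_mk_iff_exists]
    refine (exists_congr fun k => ?_).trans partialApp_iff_exists.symm
    rw [graph, comp_tupleLift, tupleLift_injective.eq_iff, prod.hom_ext_iff]
    simp [funext_iff, Fin.forall_fin_succ, prod.lift_fst, prod.lift_snd, and_assoc]

lemma realizer_interp_iff {n : ℕ} (t : PTerm n) {Γ : E} (r : Γ ⟶ S.A) :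
    (S.toRegStructure (S.interp R)).Realizer t r ↔ (R t).Factors r := by
  change Subobject.Factors (Subobject.pullback _ |>.obj _) _ ↔ _
  rw [pullback_factors_iff, tupleLift_npowProj]
  rfl

end OPAS

end Interpretation

section Regular

variable {E : Type u} [Category.{v} E] [RegularCat E]

lemma isCover_prod_snd {Γ : E} {e : Γ ⟶ ⊤_ E} (he : IsCover e) (Δ : E) :
    IsCover (prod.snd : Γ ⨯ Δ ⟶ Δ) :=
  RegularCat.coverStable _ _ _ _ (IsPullback.of_hasBinaryProduct' Γ Δ).flip
    (terminal.hom_ext e (terminal.from Γ) ▸ he)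

lemma exists_isCover_of_factors_imageSubobject {X Y Γ : E} {f : X ⟶ Y} {g : Γ ⟶ Y}
    (h : (imageSubobject f).Factors g) :
    ∃ (Δ : E) (q : Δ ⟶ Γ), IsCover q ∧ ∃ s : Δ ⟶ X, q ≫ g = s ≫ f := by
  obtain ⟨k, rfl⟩ := (factors_mk_iff_exists _ _).1 h
  refine ⟨pullback (factorThruImage f) k, pullback.snd _ _,
    RegularCat.coverStable _ _ _ _ (IsPullback.of_hasPullback _ _).flip
      (RegularCat.coverFactorThruImage f), pullback.fst _ _, ?_⟩
  rw [← Category.assoc, ← pullback.condition, Category.assoc, image.fac]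

namespace OPCA

variable (O : OPCA E)

/-- The image of a realizer of `t` chosen over a cover of `⊤`. -/
noncomputable def realizerSubobject {n : ℕ} (t : PTerm n) : Subobject O.A :=
  imageSubobject (O.complete t).choose_spec.choose_spec.choose

lemma exists_isCover_factors_realizerSubobject {n : ℕ} (t : PTerm n) (Γ : E) :
    ∃ (Δ : E) (q : Δ ⟶ Γ), IsCover q ∧ ∃ r : Δ ⟶ O.A, (O.realizerSubobject t).Factors r :=
  ⟨_, prod.snd, isCover_prod_snd (O.complete t).choose_spec.choose_spec.choose_spec.1 Γ,
    prod.fst ≫ _, imageSubobject_factors_comp_self _ _⟩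

lemma locallyRepresents_of_factors_realizerSubobject {n : ℕ} (t : PTerm n) {Γ : E}
    {r : Γ ⟶ O.A} (h : (O.realizerSubobject t).Factors r) : O.LocallyRepresents t r := by
  intro x v hx
  obtain ⟨Δ, q, hq, s, hs⟩ := exists_isCover_of_factors_imageSubobject h
  obtain ⟨y, hy, hev⟩ := (O.complete t).choose_spec.choose_spec.choose_spec.2 Δ s _ _ (hx.comp q)
  exact ⟨Δ, q, hq, y, hy, hs ▸ hev⟩

noncomputable def toModel : RegStructure opcaLang E :=
  O.toRegStructure (O.interp O.realizerSubobject)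

lemma isModel_toModel : O.toModel.IsModel opcaTheory := by
  have hI := O.interprets_interp O.realizerSubobject
  refine (RegStructure.isModel_opcaTheory_iff _).2 ⟨?_, ?_, ?_, ?_, ?_, fun t => ⟨?_, ?_⟩⟩
  · refine RegStructure.satisfies_leReflAx_iff.2 fun x => ?_
    exact (hI.le_iff x x).2 (O.le_refl x)
  · refine RegStructure.satisfies_leAntisymmAx_iff.2 fun x y hxy hyx => ?_
    exact O.le_antisymm x y ((hI.le_iff x y).1 hxy) ((hI.le_iff y x).1 hyx)
  · refine RegStructure.satisfies_leTransAx_iff.2 fun x y z hxy hyz => ?_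
    exact (hI.le_iff x z).2 (O.le_trans x y z ((hI.le_iff x y).1 hxy) ((hI.le_iff y z).1 hyz))
  · refine RegStructure.satisfies_appFunctionalAx_iff.2 fun x y z z' hz hz' => ?_
    exact PartialApp.unique (D := O.dom) (f := O.app) ((hI.app_iff x y z).1 hz)
      ((hI.app_iff x y z').1 hz')
  · refine RegStructure.satisfies_appMonoAx_of_exists_app_le fun a b c d e hab hcd hbde => ?_
    obtain ⟨f, hf, hfe⟩ := OPAS.exists_app_le ((hI.le_iff a b).1 hab) ((hI.le_iff c d).1 hcd)
      ((hI.app_iff b d e).1 hbde)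
    exact ⟨f, (hI.app_iff a c f).2 hf, (hI.le_iff f e).2 hfe⟩
  · refine (RegStructure.satisfies_realizerInhabitedAx_iff t).2 fun Γ => ?_
    simpa only [toModel, OPAS.realizer_interp_iff] using
      O.exists_isCover_factors_realizerSubobject t Γ
  · refine (hI.satisfies_realizerRepresentsAx_iff t).2 fun r hr => ?_
    exact O.locallyRepresents_of_factors_realizerSubobject t ((OPAS.realizer_interp_iff _ t r).1 hr)

end OPCA

end Regular

/-- Statement 14: there is a regular theory — in a language with a binary
relation `≤` and a ternary relation `xy↓z` — whose models in any regular category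
are exactly the ordered partial combinatory algebras. -/
theorem statement14 :
    ∃ (L : RegLang) (T : RegTheory L) (leR appR : L.Rel)
      (h2 : L.arity leR = 2) (h3 : L.arity appR = 3),
      ∀ (E : Type u) [Category.{v} E] [RegularCat E],
        (∀ M : RegStructure L E, M.IsModel T →
          ∃ (O : OPCA E) (iso : M.carrier ≅ O.A),
            (∀ {Γ : E} (x y : Γ ⟶ M.carrier),
              (M.interp leR).Factors (tupleLift (fun k => ![x, y] (Fin.cast h2 k))) ↔
                O.toOPAS.Le (x ≫ iso.hom) (y ≫ iso.hom)) ∧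
            (∀ {Γ : E} (x y z : Γ ⟶ M.carrier),
              (M.interp appR).Factors (tupleLift (fun k => ![x, y, z] (Fin.cast h3 k))) ↔
                O.toOPAS.App (x ≫ iso.hom) (y ≫ iso.hom) (z ≫ iso.hom))) ∧
        (∀ O : OPCA E, ∃ M : RegStructure L E, M.IsModel T ∧
          ∃ iso : M.carrier ≅ O.A,
            (∀ {Γ : E} (x y : Γ ⟶ M.carrier),
              (M.interp leR).Factors (tupleLift (fun k => ![x, y] (Fin.cast h2 k))) ↔
                O.toOPAS.Le (x ≫ iso.hom) (y ≫ iso.hom)) ∧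
            (∀ {Γ : E} (x y z : Γ ⟶ M.carrier),
              (M.interp appR).Factors (tupleLift (fun k => ![x, y, z] (Fin.cast h3 k))) ↔
                O.toOPAS.App (x ≫ iso.hom) (y ≫ iso.hom) (z ≫ iso.hom))) := by
  refine ⟨opcaLang, opcaTheory, OpcaRel.le, OpcaRel.app, rfl, rfl, fun E _ _ => ⟨fun M hM => ?_,
    fun O => ⟨O.toModel, O.isModel_toModel, ?_⟩⟩⟩
  · have hI := M.interprets_toOPAS hM
    refine ⟨M.toOPCA hM, Iso.refl _, fun x y => ?_, fun x y z => ?_⟩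
    · erw [Category.comp_id, Category.comp_id]
      exact hI.le_iff x y
    · erw [Category.comp_id, Category.comp_id, Category.comp_id]
      exact hI.app_iff x y z
  · have hI := O.interprets_interp O.realizerSubobject
    refine ⟨Iso.refl _, fun x y => ?_, fun x y z => ?_⟩
    · erw [Category.comp_id, Category.comp_id]
      exact hI.le_iff x y
    · erw [Category.comp_id, Category.comp_id, Category.comp_id]
      exact hI.app_iff x y z

end RRC
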